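/- Let p be a prime, ι an arbitrary index set, and A a finite abelian p-group given the discrete topology. Then the group of continuous group homomorphisms from the product ∏_{i ∈ ι} ℤ_p (with the product topology, each factor the p-adic integers) to A is isomorphic to the direct sum ⨁_{i ∈ ι} A (the group of finitely supported functions ι → A). -/

import Mathlib

/-!
A continuous homomorphism from `∏ ℤ_p` to a discrete group kills a basic neighbourhood of `0`,
so it only depends on finitely many coordinates; this identifies `Hom_cont(∏ ℤ_p, A)` with
`⨁ Hom_cont(ℤ_p, A)`. A continuous homomorphism `ℤ_p → A` is determined by its value at `1`
because `ℕ` is dense in `ℤ_p`, and as `p ^ n` kills `A`, any `a` is the value at `1` of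
`z ↦ (z mod p ^ n) • a`, which is continuous because the kernel `p ^ n ℤ_p` of reduction
is open.
-/

theorem map_eq_sum_single_of_forall_mem_eq_zero {ι M A F : Type*} [DecidableEq ι]
    [AddCommGroup M] [AddCommMonoid A] [FunLike F (ι → M) A] [AddMonoidHomClass F (ι → M) A]
    (φ : F) {S : Finset ι} (hS : ∀ x : ι → M, (∀ i ∈ S, x i = 0) → φ x = 0)
    (x : ι → M) : φ x = ∑ i ∈ S, φ (Pi.single i (x i)) := by
  have hrest : φ (x - ∑ i ∈ S, Pi.single i (x i)) = 0 :=
    hS _ fun j hj => by simp [Finset.sum_apply, Pi.single_apply, hj]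
  calc φ x = φ (∑ i ∈ S, Pi.single i (x i)) + φ (x - ∑ i ∈ S, Pi.single i (x i)) := by
        rw [← map_add, add_sub_cancel]
    _ = ∑ i ∈ S, φ (Pi.single i (x i)) := by rw [hrest, add_zero, map_sum]

namespace ContinuousAddMonoidHom

variable {ι M A : Type*} [AddCommGroup M] [TopologicalSpace M]
  [AddCommMonoid A] [TopologicalSpace A] [DiscreteTopology A]

theorem exists_finset_forall_eq_zero (φ : ContinuousAddMonoidHom (ι → M) A) :
    ∃ S : Finset ι, ∀ x : ι → M, (∀ i ∈ S, x i = 0) → φ x = 0 := by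
  have hker : φ ⁻¹' {0} ∈ nhds (0 : ι → M) :=
    (map_continuous φ).continuousAt.preimage_mem_nhds (by simp)
  rw [nhds_pi, Filter.mem_pi] at hker
  obtain ⟨I, hI, V, hV, hVker⟩ := hker
  refine ⟨hI.toFinset, fun x hx => hVker fun i hi => ?_⟩
  rw [hx i (hI.mem_toFinset.mpr hi)]
  exact mem_of_mem_nhds (hV i)

variable [DecidableEq ι]

variable (M) in
def single (i : ι) : ContinuousAddMonoidHom M (ι → M) :=
  ⟨AddMonoidHom.single (fun _ => M) i, continuous_single (A := fun _ => M) i⟩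

omit [DiscreteTopology A] in
theorem comp_single_eq_zero_of_notMem {φ : ContinuousAddMonoidHom (ι → M) A} {S : Finset ι}
    (hS : ∀ x : ι → M, (∀ i ∈ S, x i = 0) → φ x = 0) {i : ι} (hi : i ∉ S) :
    φ.comp (single M i) = 0 :=
  ext fun z => hS _ fun _ hj =>
    Pi.single_eq_of_ne (M := fun _ => M) (ne_of_mem_of_not_mem hj hi) z

theorem finite_support_comp_single (φ : ContinuousAddMonoidHom (ι → M) A) :
    (Function.support fun i => φ.comp (single M i)).Finite := by
  obtain ⟨S, hS⟩ := φ.exists_finset_forall_eq_zero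
  exact S.finite_toSet.subset fun i hi =>
    by_contra fun hiS => hi (comp_single_eq_zero_of_notMem hS hiS)

noncomputable def toFinsupp (φ : ContinuousAddMonoidHom (ι → M) A) :
    ι →₀ ContinuousAddMonoidHom M A :=
  Finsupp.ofSupportFinite _ φ.finite_support_comp_single

noncomputable def piEquivFinsupp :
    ContinuousAddMonoidHom (ι → M) A ≃+ (ι →₀ ContinuousAddMonoidHom M A) where
  toFun := toFinsupp
  invFun f :=
    { toFun x := f.sum fun i ψ => ψ (x i)
      map_zero' := by simp
      map_add' x y := by simp only [Pi.add_apply, map_add, Finsupp.sum_add]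
      continuous_toFun :=
        continuous_finsetSum _ fun i _ => (map_continuous _).comp (continuous_apply i) }
  left_inv φ := by
    obtain ⟨S, hS⟩ := φ.exists_finset_forall_eq_zero
    ext x
    change ∑ i ∈ φ.toFinsupp.support, φ.toFinsupp i (x i) = φ x
    rw [map_eq_sum_single_of_forall_mem_eq_zero φ hS x]
    refine Finset.sum_subset (fun i hi => ?_) fun i _ hi => ?_
    · exact by_contra fun hiS =>
        Finsupp.mem_support_iff.mp hi (comp_single_eq_zero_of_notMem hS hiS)
    · rw [Finsupp.notMem_support_iff.mp hi]; rfl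
  right_inv f := by
    ext i z
    change (f.sum fun j ψ => ψ (Pi.single (M := fun _ => M) i z j)) = f i z
    rw [Finsupp.sum_eq_single i
      (fun j _ hj => by rw [Pi.single_eq_of_ne (M := fun _ => M) hj, map_zero]) (by simp),
      Pi.single_eq_same]
  map_add' φ ψ := by ext; rfl

end ContinuousAddMonoidHom

namespace PadicInt

variable {p : ℕ} [Fact p.Prime]

theorem continuous_toZModPow (n : ℕ) : Continuous (toZModPow n : ℤ_[p] → ZMod (p ^ n)) := by
  refine continuous_of_continuousAt_zero (toZModPow n : ℤ_[p] →+* ZMod (p ^ n)) ?_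
  rw [ContinuousAt, map_zero, nhds_discrete (ZMod (p ^ n)), Filter.tendsto_pure]
  have hker : IsOpen (RingHom.ker (toZModPow n : ℤ_[p] →+* ZMod (p ^ n)) : Set ℤ_[p]) := by
    rw [ker_toZModPow, ← Ideal.span_singleton_pow, ← maximalIdeal_eq_span_p]
    exact IsLocalRing.isOpen_maximalIdeal_pow ℤ_[p] n
  exact hker.mem_nhds (zero_mem _)

variable {A : Type*} [TopologicalSpace A]

theorem continuousAddMonoidHom_ext [AddMonoid A] [T2Space A]
    {φ ψ : ContinuousAddMonoidHom ℤ_[p] A} (h : φ 1 = ψ 1) : φ = ψ := by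
  refine ContinuousAddMonoidHom.ext (congrFun (denseRange_natCast.equalizer (map_continuous φ)
    (map_continuous ψ) (funext fun m => ?_)))
  simp only [Function.comp_apply]
  rw [← nsmul_one, map_nsmul, map_nsmul, h]

variable [AddCommGroup A]

noncomputable def toZModPowSmul (n : ℕ) [Module (ZMod (p ^ n)) A] (a : A) :
    ContinuousAddMonoidHom ℤ_[p] A :=
  ⟨((LinearMap.toSpanSingleton (ZMod (p ^ n)) A a).toAddMonoidHom.comp
    (toZModPow n : ℤ_[p] →+* ZMod (p ^ n)).toAddMonoidHom),
    (continuous_of_discreteTopology (f := fun c : ZMod (p ^ n) => c • a)).comp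
      (continuous_toZModPow n)⟩

@[simp]
theorem toZModPowSmul_apply (n : ℕ) [Module (ZMod (p ^ n)) A] (a : A) (z : ℤ_[p]) :
    toZModPowSmul n a z = toZModPow n z • a := rfl

noncomputable def continuousAddMonoidHomEquiv [ContinuousAdd A] [T2Space A] (n : ℕ)
    [Module (ZMod (p ^ n)) A] :
    ContinuousAddMonoidHom ℤ_[p] A ≃+ A where
  toFun φ := φ 1
  invFun := toZModPowSmul n
  left_inv φ := continuousAddMonoidHom_ext (by simp)
  right_inv a := by simp
  map_add' _ _ := rfl

end PadicInt

theorem continuousHom_pi_padicInt_iso_directSum_general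
    (p : ℕ) [Fact p.Prime] (ι : Type*)
    (A : Type*) [AddCommGroup A] [Finite A]
    [TopologicalSpace A] [DiscreteTopology A]
    (hA : ∃ n : ℕ, Nat.card A = p ^ n) :
    Nonempty (ContinuousAddMonoidHom (ι → ℤ_[p]) A ≃+ (ι →₀ A)) := by
  classical
  obtain ⟨n, hn⟩ := hA
  let _ : Module (ZMod (p ^ n)) A := AddCommGroup.zmodModule fun a => hn ▸ card_nsmul_eq_zero'
  exact ⟨ContinuousAddMonoidHom.piEquivFinsupp.trans
    (Finsupp.mapRange.addEquiv (PadicInt.continuousAddMonoidHomEquiv (p := p) n))⟩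

/-- Let `p` be a prime, `ι` an arbitrary index set, and `A` a finite
abelian `p`-group with the discrete topology.  Then the group of continuous group
homomorphisms from `∏_{i ∈ ι} ℤ_p` (with the product topology) to `A` is isomorphic to
the direct sum `⨁_{i ∈ ι} A` of copies of `A`, i.e. the group of finitely supported
functions `ι → A`. -/
theorem continuousHom_pi_padicInt_iso_directSum
    (p : ℕ) [Fact p.Prime] (ι : Type*)
    (A : Type*) [AddCommGroup A] [Finite A]
    [TopologicalSpace A] [DiscreteTopology A] [IsTopologicalAddGroup A]
    (hA : ∃ n : ℕ, Nat.card A = p ^ n) :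
    Nonempty (ContinuousAddMonoidHom (ι → ℤ_[p]) A ≃+ (ι →₀ A)) :=
  continuousHom_pi_padicInt_iso_directSum_general p ι A hA
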